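/- Terminating well-poised ${}_6\phi_5$-type telescoping summation: Let $n \ge 0$ be an integer and let $q, A, B, C$ be nonzero complex numbers such that all factors occurring in denominators below are nonzero. Then $\sum_{k=0}^{n} \frac{(1 - Aq^{2k})\,(A;q)_k (B;q)_k (C;q)_k (A/(BC);q)_k}{(1-A)\,(q;q)_k (Aq/B;q)_k (Aq/C;q)_k (BCq;q)_k} q^k = \frac{(Aq;q)_n (Bq;q)_n (Cq;q)_n (Aq/(BC);q)_n}{(q;q)_n (Aq/B;q)_n (Aq/C;q)_n (BCq;q)_n}$; equivalently, the $k$-th summand equals $\frac{(Aq,Bq,Cq,Aq/(BC);q)_k}{(q,Aq/B,Aq/C,BCq;q)_k} - \frac{(Aq,Bq,Cq,Aq/(BC);q)_{k-1}}{(q,Aq/B,Aq/C,BCq;q)_{k-1}}$ for $k \ge 1$. -/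

import Mathlib

set_option autoImplicit false

/-- The q-shifted factorial `(a;q)_n = ∏_{j=0}^{n-1} (1 - a q^j)`. -/
noncomputable def qPoch (q a : ℂ) (n : ℕ) : ℂ := ∏ j ∈ Finset.range n, (1 - a * q ^ j)

/-!
Let `t_k = (Aq, Bq, Cq, Aq/(BC); q)_k / (q, Aq/B, Aq/C, BCq; q)_k`. With `x = q^(m+1)`, passing
from `t_m` to `t_{m+1}` multiplies by `F(x) / E(x)`, where
`F(x) = (1 - Ax)(1 - Bx)(1 - Cx)(1 - Ax/(BC))` and `E(x) = (1 - x)(1 - Ax/B)(1 - Ax/C)(1 - BCx)`,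
while the `(m+1)`-st summand is `t_m G(x) / E(x)` with
`G(x) = (1 - Ax²)(1 - B)(1 - C)(1 - A/(BC)) x`.
The well-poised polynomial identity `F - E = G` turns the summand into `t_{m+1} - t_m`, so the sum
telescopes.
-/

theorem wellPoised_quartic_identity {K : Type*} [Field K] {B C : K} (hB : B ≠ 0) (hC : C ≠ 0)
    (A x : K) :
    (1 - A * x) * (1 - B * x) * (1 - C * x) * (1 - A / (B * C) * x)
        - (1 - x) * (1 - A / B * x) * (1 - A / C * x) * (1 - B * C * x)
      = (1 - A * x ^ 2) * (1 - B) * (1 - C) * (1 - A / (B * C)) * x := by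
  field_simp
  ring

theorem qPoch_zero (q a : ℂ) : qPoch q a 0 = 1 :=
  Finset.prod_range_zero _

theorem qPoch_succ (q a : ℂ) (n : ℕ) : qPoch q a (n + 1) = qPoch q a n * (1 - a * q ^ n) :=
  Finset.prod_range_succ _ _

theorem qPoch_succ' (q a : ℂ) (n : ℕ) : qPoch q a (n + 1) = (1 - a) * qPoch q (a * q) n := by
  rw [qPoch, Finset.prod_range_succ', mul_comm, pow_zero, mul_one]
  congr 1
  exact Finset.prod_congr rfl fun j _ => by rw [pow_succ, mul_assoc, mul_comm q]

namespace WellPoised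

variable (q A B C : ℂ)

noncomputable def den (k : ℕ) : ℂ :=
  qPoch q q k * qPoch q (A * q / B) k * qPoch q (A * q / C) k * qPoch q (B * C * q) k

noncomputable def ratio (k : ℕ) : ℂ :=
  qPoch q (A * q) k * qPoch q (B * q) k * qPoch q (C * q) k * qPoch q (A * q / (B * C)) k /
    den q A B C k

noncomputable def term (k : ℕ) : ℂ :=
  (1 - A * q ^ (2 * k)) *
      (qPoch q A k * qPoch q B k * qPoch q C k * qPoch q (A / (B * C)) k) * q ^ k /
    ((1 - A) * den q A B C k)

noncomputable def denFactor (x : ℂ) : ℂ :=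
  (1 - x) * (1 - A / B * x) * (1 - A / C * x) * (1 - B * C * x)

noncomputable def numFactor (x : ℂ) : ℂ :=
  (1 - A * x) * (1 - B * x) * (1 - C * x) * (1 - A / (B * C) * x)

theorem den_succ (m : ℕ) :
    den q A B C (m + 1) = den q A B C m * denFactor A B C (q ^ (m + 1)) := by
  simp only [den, denFactor, qPoch_succ, pow_succ]
  ring

theorem ratio_zero : ratio q A B C 0 = 1 := by
  simp [ratio, den, qPoch_zero]

theorem ratio_succ (m : ℕ) :
    ratio q A B C (m + 1) =
      ratio q A B C m * (numFactor A B C (q ^ (m + 1)) / denFactor A B C (q ^ (m + 1))) := by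
  rw [ratio, ratio, div_mul_div_comm, den_succ]
  congr 1
  simp only [numFactor, qPoch_succ, pow_succ]
  ring

theorem term_zero (h1A : 1 - A ≠ 0) : term q A B C 0 = 1 := by
  simp [term, den, qPoch_zero, h1A]

theorem term_succ (h1A : 1 - A ≠ 0) (m : ℕ) :
    term q A B C (m + 1) =
      ratio q A B C m *
        ((1 - A * (q ^ (m + 1)) ^ 2) * (1 - B) * (1 - C) * (1 - A / (B * C)) * q ^ (m + 1) /
          denFactor A B C (q ^ (m + 1))) := by
  rw [ratio, div_mul_div_comm, ← mul_div_mul_left _ (den q A B C m * _) h1A, term, den_succ]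
  congr 1
  simp only [qPoch_succ', show A / (B * C) * q = A * q / (B * C) by ring]
  ring

theorem term_succ_eq_ratio_sub (hB : B ≠ 0) (hC : C ≠ 0) (h1A : 1 - A ≠ 0) (m : ℕ)
    (hden : den q A B C (m + 1) ≠ 0) :
    term q A B C (m + 1) = ratio q A B C (m + 1) - ratio q A B C m := by
  have hE : denFactor A B C (q ^ (m + 1)) ≠ 0 := by
    rw [den_succ] at hden
    exact right_ne_zero_of_mul hden
  rw [term_succ q A B C h1A, ratio_succ, ← wellPoised_quartic_identity hB hC, ← numFactor,
    ← denFactor, sub_div, div_self hE, mul_sub, mul_one]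

theorem sum_term (hB : B ≠ 0) (hC : C ≠ 0) (h1A : 1 - A ≠ 0)
    (hden : ∀ k, den q A B C k ≠ 0) (n : ℕ) :
    ∑ k ∈ Finset.range (n + 1), term q A B C k = ratio q A B C n := by
  rw [Finset.sum_range_succ', term_zero q A B C h1A,
    Finset.sum_congr rfl fun m _ => term_succ_eq_ratio_sub q A B C hB hC h1A m (hden (m + 1)),
    Finset.sum_range_sub, ratio_zero, sub_add_cancel]

end WellPoised

theorem wellpoised_telescoping_summation_general (n : ℕ) (q A B C : ℂ)
    (hB : B ≠ 0) (hC : C ≠ 0) (h1A : 1 - A ≠ 0)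
    (hden : ∀ k : ℕ,
      qPoch q q k * qPoch q (A * q / B) k * qPoch q (A * q / C) k * qPoch q (B * C * q) k ≠ 0) :
    (∑ k ∈ Finset.range (n + 1),
        (1 - A * q ^ (2 * k)) *
          (qPoch q A k * qPoch q B k * qPoch q C k * qPoch q (A / (B * C)) k) * q ^ k /
          ((1 - A) *
            (qPoch q q k * qPoch q (A * q / B) k * qPoch q (A * q / C) k *
              qPoch q (B * C * q) k))
      = qPoch q (A * q) n * qPoch q (B * q) n * qPoch q (C * q) n *
          qPoch q (A * q / (B * C)) n /
          (qPoch q q n * qPoch q (A * q / B) n * qPoch q (A * q / C) n *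
            qPoch q (B * C * q) n))
    ∧ ∀ k : ℕ, 1 ≤ k →
        (1 - A * q ^ (2 * k)) *
          (qPoch q A k * qPoch q B k * qPoch q C k * qPoch q (A / (B * C)) k) * q ^ k /
          ((1 - A) *
            (qPoch q q k * qPoch q (A * q / B) k * qPoch q (A * q / C) k *
              qPoch q (B * C * q) k))
        = qPoch q (A * q) k * qPoch q (B * q) k * qPoch q (C * q) k *
            qPoch q (A * q / (B * C)) k /
            (qPoch q q k * qPoch q (A * q / B) k * qPoch q (A * q / C) k *
              qPoch q (B * C * q) k)
          - qPoch q (A * q) (k - 1) * qPoch q (B * q) (k - 1) * qPoch q (C * q) (k - 1) *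
              qPoch q (A * q / (B * C)) (k - 1) /
              (qPoch q q (k - 1) * qPoch q (A * q / B) (k - 1) * qPoch q (A * q / C) (k - 1) *
                qPoch q (B * C * q) (k - 1)) := by
  refine ⟨WellPoised.sum_term q A B C hB hC h1A hden n, fun k hk => ?_⟩
  obtain ⟨m, rfl⟩ := Nat.exists_eq_add_of_le' hk
  exact WellPoised.term_succ_eq_ratio_sub q A B C hB hC h1A m (hden (m + 1))

/-- Terminating well-poised ₆φ₅-type telescoping summation. -/
theorem wellpoised_telescoping_summation (n : ℕ) (q A B C : ℂ) (hq : q ≠ 0) (hA : A ≠ 0)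
    (hB : B ≠ 0) (hC : C ≠ 0) (h1A : 1 - A ≠ 0)
    (hden : ∀ k : ℕ,
      qPoch q q k * qPoch q (A * q / B) k * qPoch q (A * q / C) k * qPoch q (B * C * q) k ≠ 0) :
    (∑ k ∈ Finset.range (n + 1),
        (1 - A * q ^ (2 * k)) *
          (qPoch q A k * qPoch q B k * qPoch q C k * qPoch q (A / (B * C)) k) * q ^ k /
          ((1 - A) *
            (qPoch q q k * qPoch q (A * q / B) k * qPoch q (A * q / C) k *
              qPoch q (B * C * q) k))
      = qPoch q (A * q) n * qPoch q (B * q) n * qPoch q (C * q) n *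
          qPoch q (A * q / (B * C)) n /
          (qPoch q q n * qPoch q (A * q / B) n * qPoch q (A * q / C) n *
            qPoch q (B * C * q) n))
    ∧ ∀ k : ℕ, 1 ≤ k →
        (1 - A * q ^ (2 * k)) *
          (qPoch q A k * qPoch q B k * qPoch q C k * qPoch q (A / (B * C)) k) * q ^ k /
          ((1 - A) *
            (qPoch q q k * qPoch q (A * q / B) k * qPoch q (A * q / C) k *
              qPoch q (B * C * q) k))
        = qPoch q (A * q) k * qPoch q (B * q) k * qPoch q (C * q) k *
            qPoch q (A * q / (B * C)) k /
            (qPoch q q k * qPoch q (A * q / B) k * qPoch q (A * q / C) k *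
              qPoch q (B * C * q) k)
          - qPoch q (A * q) (k - 1) * qPoch q (B * q) (k - 1) * qPoch q (C * q) (k - 1) *
              qPoch q (A * q / (B * C)) (k - 1) /
              (qPoch q q (k - 1) * qPoch q (A * q / B) (k - 1) * qPoch q (A * q / C) (k - 1) *
                qPoch q (B * C * q) (k - 1)) :=
  wellpoised_telescoping_summation_general n q A B C hB hC h1A hden
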